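/- arXiv:2301.05472 — 6 statements merged into one kernel-verified Lean document; each statement's English description precedes it below -/
import Mathlib

section
/- Let c : [0,1] → ℝ satisfy c ≥ 1 on [0,1]. Let ρ : [0,T] × ℝ → [0,1] be such that for each t the function x ↦ c(ρ(t,x)) is integrable on [-1,1], and suppose ξ : [0,T] → (-1,1) satisfies the balance ∫_{-1}^{ξ(t)} c(ρ(t,x)) dx = ∫_{ξ(t)}^1 c(ρ(t,x)) dx for all t. Then for all s, t ∈ [0,T], writing ξ̲ = min(ξ(s),ξ(t)) and ξ̄ = max(ξ(s),ξ(t)), one has 2|ξ(t) − ξ(s)| ≤ |∫_{-1}^{ξ̲} (c(ρ(t,x)) − c(ρ(s,x))) dx − ∫_{ξ̄}^{1} (c(ρ(t,x)) − c(ρ(s,x))) dx|. -/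
/-!
Say `ξ s ≤ ξ t`. Subtracting the balance identities at `s` and `t` cancels everything outside
`[ξ s, ξ t]`, so the right-hand side equals `∫_{ξ s}^{ξ t} (c(ρ(t,·)) + c(ρ(s,·)))`, which is at
least `2 (ξ t - ξ s)` because `c ≥ 1`. The other order follows by exchanging `s` and `t`, which
only flips the sign inside the absolute value.
-/

open MeasureTheory intervalIntegral Set

lemma sub_le_integral_of_one_le {f : ℝ → ℝ} {a b : ℝ} (hab : a ≤ b)
    (hf : IntervalIntegrable f volume a b) (hf1 : ∀ x ∈ Icc a b, 1 ≤ f x) :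
    b - a ≤ ∫ x in a..b, f x := by
  calc b - a = ∫ _ in a..b, (1 : ℝ) := by simp
    _ ≤ ∫ x in a..b, f x := integral_mono_on hab intervalIntegrable_const hf hf1

section Balance

variable {f g : ℝ → ℝ} {l r a b : ℝ}

lemma integral_sub_sub_integral_sub_of_balance
    (hf : IntervalIntegrable f volume l r) (hg : IntervalIntegrable g volume l r)
    (ha : a ∈ uIcc l r) (hb : b ∈ uIcc l r)
    (hbf : ∫ x in l..b, f x = ∫ x in b..r, f x)
    (hag : ∫ x in l..a, g x = ∫ x in a..r, g x) :
    (∫ x in l..a, (f x - g x)) - ∫ x in b..r, (f x - g x) =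
      -((∫ x in a..b, f x) + ∫ x in a..b, g x) := by
  have on : ∀ {h : ℝ → ℝ} {u v}, IntervalIntegrable h volume l r → u ∈ uIcc l r →
      v ∈ uIcc l r → IntervalIntegrable h volume u v :=
    fun hh hu hv => hh.mono_set (uIcc_subset_uIcc hu hv)
  have hl : l ∈ uIcc l r := left_mem_uIcc
  have hr : r ∈ uIcc l r := right_mem_uIcc
  have hf_split := integral_add_adjacent_intervals (on hf hl ha) (on hf ha hb)
  have hg_split := integral_add_adjacent_intervals (on hg ha hb) (on hg hb hr)
  rw [integral_sub (on hf hl ha) (on hg hl ha), integral_sub (on hf hb hr) (on hg hb hr)]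
  linarith

lemma two_mul_sub_le_abs_of_balance (hab : a ≤ b)
    (hf : IntervalIntegrable f volume l r) (hg : IntervalIntegrable g volume l r)
    (hf1 : ∀ x ∈ Icc a b, 1 ≤ f x) (hg1 : ∀ x ∈ Icc a b, 1 ≤ g x)
    (ha : a ∈ uIcc l r) (hb : b ∈ uIcc l r)
    (hbf : ∫ x in l..b, f x = ∫ x in b..r, f x)
    (hag : ∫ x in l..a, g x = ∫ x in a..r, g x) :
    2 * (b - a) ≤ |(∫ x in l..a, (f x - g x)) - ∫ x in b..r, (f x - g x)| := by
  have hsub : uIcc a b ⊆ uIcc l r := uIcc_subset_uIcc ha hb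
  have lbf := sub_le_integral_of_one_le hab (hf.mono_set hsub) hf1
  have lbg := sub_le_integral_of_one_le hab (hg.mono_set hsub) hg1
  rw [integral_sub_sub_integral_sub_of_balance hf hg ha hb hbf hag, abs_neg,
    abs_of_nonneg (by linarith)]
  linarith

lemma two_mul_abs_sub_le_abs_of_balance
    (hf : IntervalIntegrable f volume l r) (hg : IntervalIntegrable g volume l r)
    (hf1 : ∀ x, 1 ≤ f x) (hg1 : ∀ x, 1 ≤ g x)
    (ha : a ∈ uIcc l r) (hb : b ∈ uIcc l r)
    (hbf : ∫ x in l..b, f x = ∫ x in b..r, f x)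
    (hag : ∫ x in l..a, g x = ∫ x in a..r, g x) :
    2 * |b - a| ≤
      |(∫ x in l..min a b, (f x - g x)) - ∫ x in max a b..r, (f x - g x)| := by
  wlog hab : a ≤ b generalizing f g a b
  · have h := this hg hf hg1 hf1 hb ha hag hbf (le_of_not_ge hab)
    have hneg : ∀ u v, ∫ x in u..v, (g x - f x) = -∫ x in u..v, (f x - g x) := fun u v => by
      simp only [← intervalIntegral.integral_neg, neg_sub]
    rwa [abs_sub_comm a b, min_comm, max_comm, hneg, hneg, sub_neg_eq_add, neg_add_eq_sub,
      abs_sub_comm (∫ x in max a b..r, (f x - g x))] at h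
  rw [abs_of_nonneg (sub_nonneg.2 hab), min_eq_left hab, max_eq_right hab]
  exact two_mul_sub_le_abs_of_balance hab hf hg (fun x _ => hf1 x) (fun x _ => hg1 x) ha hb
    hbf hag

end Balance

theorem stmt2_general (T : ℝ) (c : ℝ → ℝ)
    (hc1 : ∀ p ∈ Set.Icc (0:ℝ) 1, 1 ≤ c p)
    (ρ : ℝ → ℝ → ℝ) (hρ : ∀ t x, ρ t x ∈ Set.Icc (0:ℝ) 1)
    (hint : ∀ t, IntervalIntegrable (fun x => c (ρ t x)) MeasureTheory.volume (-1) 1)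
    (ξ : ℝ → ℝ) (hξ : ∀ t ∈ Set.Icc 0 T, ξ t ∈ Set.Ioo (-1:ℝ) 1)
    (hbal : ∀ t ∈ Set.Icc 0 T,
      (∫ x in (-1:ℝ)..(ξ t), c (ρ t x)) = ∫ x in (ξ t)..(1:ℝ), c (ρ t x)) :
    ∀ s ∈ Set.Icc 0 T, ∀ t ∈ Set.Icc 0 T,
      2 * |ξ t - ξ s| ≤
        |(∫ x in (-1:ℝ)..(min (ξ s) (ξ t)), (c (ρ t x) - c (ρ s x))) -
          ∫ x in (max (ξ s) (ξ t))..(1:ℝ), (c (ρ t x) - c (ρ s x))| := by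
  intro s hs t ht
  have hmem : ∀ u ∈ Icc 0 T, ξ u ∈ uIcc (-1 : ℝ) 1 := fun u hu =>
    uIcc_of_le (by norm_num : (-1 : ℝ) ≤ 1) ▸ Ioo_subset_Icc_self (hξ u hu)
  exact two_mul_abs_sub_le_abs_of_balance (hint t) (hint s) (fun x => hc1 _ (hρ t x))
    (fun x => hc1 _ (hρ s x)) (hmem s hs) (hmem t ht) (hbal t ht) (hbal s hs)

/-- Key Lipschitz-type estimate for the Hughes turning curve. -/
theorem stmt2 (T : ℝ) (hT : 0 < T) (c : ℝ → ℝ)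
    (hc1 : ∀ p ∈ Set.Icc (0:ℝ) 1, 1 ≤ c p)
    (ρ : ℝ → ℝ → ℝ) (hρ : ∀ t x, ρ t x ∈ Set.Icc (0:ℝ) 1)
    (hint : ∀ t, IntervalIntegrable (fun x => c (ρ t x)) MeasureTheory.volume (-1) 1)
    (ξ : ℝ → ℝ) (hξ : ∀ t ∈ Set.Icc 0 T, ξ t ∈ Set.Ioo (-1:ℝ) 1)
    (hbal : ∀ t ∈ Set.Icc 0 T,
      (∫ x in (-1:ℝ)..(ξ t), c (ρ t x)) = ∫ x in (ξ t)..(1:ℝ), c (ρ t x)) :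
    ∀ s ∈ Set.Icc 0 T, ∀ t ∈ Set.Icc 0 T,
      2 * |ξ t - ξ s| ≤
        |(∫ x in (-1:ℝ)..(min (ξ s) (ξ t)), (c (ρ t x) - c (ρ s x))) -
          ∫ x in (max (ξ s) (ξ t))..(1:ℝ), (c (ρ t x) - c (ρ s x))| :=
  stmt2_general T c hc1 ρ hρ hint ξ hξ hbal
end

section
/- Let c : [0,1] → ℝ be Lipschitz with constant L_c (i.e. |c(u)−c(v)| ≤ L_c|u−v|), and let ρ, ρ_n : [0,T] × (-1,1) → [0,1] be measurable. Suppose ξ, ξ_n : [0,T] → (-1,1) satisfy the balance ∫_{-1}^{ξ(t)} c(ρ(t,x)) dx = ∫_{ξ(t)}^1 c(ρ(t,x)) dx for ρ and analogously for (ρ_n, ξ_n), and c ≥ 1 on [0,1]. Then ∫_0^T |ξ(t) − ξ_n(t)| dt ≤ (L_c/2) ∫_0^T ∫_{-1}^1 |ρ(t,x) − ρ_n(t,x)| dx dt. -/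
open MeasureTheory intervalIntegral

/-- bounded measurable functions are interval integrable -/
lemma bdd_ii {f : ℝ → ℝ} (hm : Measurable f) {M : ℝ} (hb : ∀ x, |f x| ≤ M)
    (p q : ℝ) : IntervalIntegrable f volume p q :=
  (_root_.intervalIntegrable_const (c := M)).mono_fun' hm.aestronglyMeasurable
    (Filter.Eventually.of_forall fun x => by simpa [Real.norm_eq_abs] using hb x)

lemma clamp_lip (u v : ℝ) : |max 0 (min u 1) - max 0 (min v 1)| ≤ |u - v| := by
  have h1 : |max (min u 1) 0 - max (min v 1) 0| ≤ |min u 1 - min v 1| :=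
    abs_max_sub_max_le_abs _ _ _
  have h2 : |min u 1 - min v 1| ≤ max |u - v| |(1:ℝ) - 1| := abs_min_sub_min_le_max u 1 v 1
  have h3 : max |u - v| |(1:ℝ) - 1| = |u - v| := by
    rw [sub_self, abs_zero]; exact max_eq_left (abs_nonneg _)
  rw [h3] at h2
  calc |max 0 (min u 1) - max 0 (min v 1)| = |max (min u 1) 0 - max (min v 1) 0| := by
        rw [max_comm, max_comm (min v 1)]
    _ ≤ |min u 1 - min v 1| := h1
    _ ≤ |u - v| := h2

/-- L¹-stability of the turning-curve operator for Lipschitz cost. -/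
theorem stmt4 (T L : ℝ) (hT : 0 < T) (c : ℝ → ℝ)
    (hcL : ∀ u ∈ Set.Icc (0:ℝ) 1, ∀ v ∈ Set.Icc (0:ℝ) 1, |c u - c v| ≤ L * |u - v|)
    (hc1 : ∀ p ∈ Set.Icc (0:ℝ) 1, 1 ≤ c p)
    (ρ ρn : ℝ → ℝ → ℝ)
    (hρ : ∀ t x, ρ t x ∈ Set.Icc (0:ℝ) 1) (hρn : ∀ t x, ρn t x ∈ Set.Icc (0:ℝ) 1)
    (hρm : Measurable (Function.uncurry ρ)) (hρnm : Measurable (Function.uncurry ρn))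
    (ξ ξn : ℝ → ℝ)
    (hξ : ∀ t ∈ Set.Icc 0 T, ξ t ∈ Set.Ioo (-1:ℝ) 1)
    (hξn : ∀ t ∈ Set.Icc 0 T, ξn t ∈ Set.Ioo (-1:ℝ) 1)
    (hbal : ∀ t ∈ Set.Icc 0 T,
      (∫ x in (-1:ℝ)..(ξ t), c (ρ t x)) = ∫ x in (ξ t)..(1:ℝ), c (ρ t x))
    (hbaln : ∀ t ∈ Set.Icc 0 T,
      (∫ x in (-1:ℝ)..(ξn t), c (ρn t x)) = ∫ x in (ξn t)..(1:ℝ), c (ρn t x)) :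
    (∫ t in (0:ℝ)..T, |ξ t - ξn t|) ≤
      (L / 2) * ∫ t in (0:ℝ)..T, ∫ x in (-1:ℝ)..(1:ℝ), |ρ t x - ρn t x| := by
  -- L is nonnegative
  have hL : 0 ≤ L := by
    have := hcL 0 (by norm_num) 1 (by norm_num)
    simp at this
    exact le_trans (abs_nonneg _) this
  -- the clamped cost is continuous
  set c' : ℝ → ℝ := fun u => c (max 0 (min u 1)) with hc'
  have hc'lip : LipschitzWith L.toNNReal c' := by
    apply LipschitzWith.of_dist_le_mul
    intro u v
    have h1 : max 0 (min u 1) ∈ Set.Icc (0:ℝ) 1 := by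
      constructor
      · exact le_max_left _ _
      · exact max_le (by norm_num) (min_le_right _ _)
    have h2 : max 0 (min v 1) ∈ Set.Icc (0:ℝ) 1 := by
      constructor
      · exact le_max_left _ _
      · exact max_le (by norm_num) (min_le_right _ _)
    have := hcL _ h1 _ h2
    have hcl := clamp_lip u v
    simp only [Real.dist_eq]
    calc |c' u - c' v| ≤ L * |max 0 (min u 1) - max 0 (min v 1)| := this
      _ ≤ L * |u - v| := by nlinarith [abs_nonneg (max 0 (min u 1) - max 0 (min v 1))]
      _ = (L.toNNReal : ℝ) * |u - v| := by rw [Real.coe_toNNReal L hL]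
  have hc'cont : Continuous c' := hc'lip.continuous
  have hc'eq : ∀ u ∈ Set.Icc (0:ℝ) 1, c' u = c u := by
    intro u hu
    simp only [hc']
    rw [min_eq_left hu.2, max_eq_right hu.1]
  -- sections are measurable
  have hsec : ∀ t, Measurable (fun x => ρ t x) := fun t => hρm.comp (measurable_prodMk_left)
  have hsecn : ∀ t, Measurable (fun x => ρn t x) := fun t => hρnm.comp (measurable_prodMk_left)
  have hfm : ∀ t, Measurable (fun x => c (ρ t x)) := by
    intro t
    have : (fun x => c (ρ t x)) = fun x => c' (ρ t x) := by
      funext x; rw [hc'eq _ (hρ t x)]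
    rw [this]
    exact hc'cont.measurable.comp (hsec t)
  have hgm : ∀ t, Measurable (fun x => c (ρn t x)) := by
    intro t
    have : (fun x => c (ρn t x)) = fun x => c' (ρn t x) := by
      funext x; rw [hc'eq _ (hρn t x)]
    rw [this]
    exact hc'cont.measurable.comp (hsecn t)
  -- cost values are bounded
  set M : ℝ := |c 0| + L with hM
  have hbd : ∀ u ∈ Set.Icc (0:ℝ) 1, |c u| ≤ M := by
    intro u hu
    have h1 : |c u - c 0| ≤ L * |u - 0| := hcL u hu 0 (by norm_num)
    have h2 : |u - 0| ≤ 1 := by rw [sub_zero, abs_of_nonneg hu.1]; exact hu.2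
    calc |c u| ≤ |c u - c 0| + |c 0| := by
          have := abs_sub_abs_le_abs_sub (c u) (c 0); linarith [abs_abs (c u)];
      _ ≤ L * |u - 0| + |c 0| := by linarith
      _ ≤ M := by nlinarith
  have hfb : ∀ t x, |c (ρ t x)| ≤ M := fun t x => hbd _ (hρ t x)
  have hgb : ∀ t x, |c (ρn t x)| ≤ M := fun t x => hbd _ (hρn t x)
  -- pointwise estimate
  have key : ∀ t ∈ Set.Icc (0:ℝ) T,
      |ξ t - ξn t| ≤ (L / 2) * ∫ x in (-1:ℝ)..(1:ℝ), |ρ t x - ρn t x| := by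
    intro t ht
    set a := ξn t with ha
    set b := ξ t with hb
    obtain ⟨hb1, hb2⟩ := hξ t ht
    obtain ⟨ha1, ha2⟩ := hξn t ht
    set f : ℝ → ℝ := fun x => c (ρ t x) with hf
    set g : ℝ → ℝ := fun x => c (ρn t x) with hg
    have hfi : ∀ p q : ℝ, IntervalIntegrable f volume p q := bdd_ii (hfm t) (hfb t)
    have hgi : ∀ p q : ℝ, IntervalIntegrable g volume p q := bdd_ii (hgm t) (hgb t)
    have hfgi : ∀ p q : ℝ, IntervalIntegrable (fun x => f x - g x) volume p q :=
      fun p q => (hfi p q).sub (hgi p q)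
    have hfgai : ∀ p q : ℝ, IntervalIntegrable (fun x => |f x - g x|) volume p q :=
      bdd_ii ((hfm t).sub (hgm t)).abs (M := 2*M)
        (fun x => by
          rw [abs_abs]
          calc |f x - g x| ≤ |f x| + |g x| := abs_sub _ _
            _ ≤ 2*M := by linarith [hfb t x, hgb t x])
    have hρi : IntervalIntegrable (fun x => |ρ t x - ρn t x|) volume (-1) 1 :=
      bdd_ii ((hsec t).sub (hsecn t)).abs (M := 2)
        (fun x => by
          rw [abs_abs]
          have h1 := hρ t x; have h2 := hρn t x
          rw [Pi.sub_apply, abs_sub_le_iff]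
          constructor <;> [linarith [h1.2, h2.1]; linarith [h1.1, h2.2]]) (-1) 1
    -- balance equations: 2 ∫_{-1}^b f = ∫_{-1}^1 f etc.
    have adjf : (∫ x in (-1:ℝ)..b, f x) + (∫ x in b..(1:ℝ), f x) = ∫ x in (-1:ℝ)..(1:ℝ), f x :=
      integral_add_adjacent_intervals (hfi _ _) (hfi _ _)
    have adjf2 : (∫ x in (-1:ℝ)..a, f x) + (∫ x in a..b, f x) = ∫ x in (-1:ℝ)..b, f x :=
      integral_add_adjacent_intervals (hfi _ _) (hfi _ _)
    have adjf3 : (∫ x in (-1:ℝ)..a, f x) + (∫ x in a..(1:ℝ), f x) = ∫ x in (-1:ℝ)..(1:ℝ), f x :=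
      integral_add_adjacent_intervals (hfi _ _) (hfi _ _)
    have adjg : (∫ x in (-1:ℝ)..a, g x) + (∫ x in a..(1:ℝ), g x) = ∫ x in (-1:ℝ)..(1:ℝ), g x :=
      integral_add_adjacent_intervals (hgi _ _) (hgi _ _)
    have balf : (∫ x in (-1:ℝ)..b, f x) = ∫ x in b..(1:ℝ), f x := hbal t ht
    have balg : (∫ x in (-1:ℝ)..a, g x) = ∫ x in a..(1:ℝ), g x := hbaln t ht
    -- 2∫_a^b f = ∫_a^1 (f-g) - ∫_{-1}^a (f-g)
    have sub1 : (∫ x in a..(1:ℝ), (f x - g x)) =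
        (∫ x in a..(1:ℝ), f x) - ∫ x in a..(1:ℝ), g x :=
      integral_sub (hfi _ _) (hgi _ _)
    have sub2 : (∫ x in (-1:ℝ)..a, (f x - g x)) =
        (∫ x in (-1:ℝ)..a, f x) - ∫ x in (-1:ℝ)..a, g x :=
      integral_sub (hfi _ _) (hgi _ _)
    have keyeq : 2 * (∫ x in a..b, f x) =
        (∫ x in a..(1:ℝ), (f x - g x)) - ∫ x in (-1:ℝ)..a, (f x - g x) := by
      rw [sub1, sub2]; linarith
    -- upper bound on the RHS
    have ub1 : |∫ x in a..(1:ℝ), (f x - g x)| ≤ ∫ x in a..(1:ℝ), |f x - g x| :=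
      intervalIntegral.abs_integral_le_integral_abs ha2.le
    have ub2 : |∫ x in (-1:ℝ)..a, (f x - g x)| ≤ ∫ x in (-1:ℝ)..a, |f x - g x| :=
      intervalIntegral.abs_integral_le_integral_abs ha1.le
    have adjabs : (∫ x in (-1:ℝ)..a, |f x - g x|) + (∫ x in a..(1:ℝ), |f x - g x|)
        = ∫ x in (-1:ℝ)..(1:ℝ), |f x - g x| :=
      integral_add_adjacent_intervals (hfgai _ _) (hfgai _ _)
    have lipbound : (∫ x in (-1:ℝ)..(1:ℝ), |f x - g x|)
        ≤ L * ∫ x in (-1:ℝ)..(1:ℝ), |ρ t x - ρn t x| := by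
      rw [← intervalIntegral.integral_const_mul]
      apply intervalIntegral.integral_mono_on (by norm_num) (hfgai _ _)
      · exact hρi.const_mul L
      · intro x _
        exact hcL _ (hρ t x) _ (hρn t x)
    -- lower bound: |∫_a^b f| ≥ |b - a|
    have lb : |b - a| ≤ |∫ x in a..b, f x| := by
      rcases le_total a b with hab | hab
      · have : (b - a) ≤ ∫ x in a..b, f x := by
          have h1 : (∫ x in a..b, (1:ℝ)) ≤ ∫ x in a..b, f x := by
            apply intervalIntegral.integral_mono_on hab intervalIntegrable_const (hfi _ _)
            intro x _
            exact hc1 _ (hρ t x)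
          simpa using h1
        rw [abs_of_nonneg (by linarith)]
        exact le_trans this (le_abs_self _)
      · have : (a - b) ≤ ∫ x in b..a, f x := by
          have h1 : (∫ x in b..a, (1:ℝ)) ≤ ∫ x in b..a, f x := by
            apply intervalIntegral.integral_mono_on hab intervalIntegrable_const (hfi _ _)
            intro x _
            exact hc1 _ (hρ t x)
          simpa using h1
        rw [abs_of_nonpos (by linarith), intervalIntegral.integral_symm, abs_neg]
        have h2 : (0:ℝ) ≤ ∫ x in b..a, f x := le_trans (by linarith) this
        rw [abs_of_nonneg h2]
        linarith
    -- combine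
    have chain : 2 * |b - a| ≤ L * ∫ x in (-1:ℝ)..(1:ℝ), |ρ t x - ρn t x| := by
      have habs : |2 * (∫ x in a..b, f x)| ≤ L * ∫ x in (-1:ℝ)..(1:ℝ), |ρ t x - ρn t x| := by
        rw [keyeq]
        calc |(∫ x in a..(1:ℝ), (f x - g x)) - ∫ x in (-1:ℝ)..a, (f x - g x)|
            ≤ |∫ x in a..(1:ℝ), (f x - g x)| + |∫ x in (-1:ℝ)..a, (f x - g x)| := abs_sub _ _
          _ ≤ (∫ x in a..(1:ℝ), |f x - g x|) + ∫ x in (-1:ℝ)..a, |f x - g x| := by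
              linarith
          _ = ∫ x in (-1:ℝ)..(1:ℝ), |f x - g x| := by linarith
          _ ≤ L * ∫ x in (-1:ℝ)..(1:ℝ), |ρ t x - ρn t x| := lipbound
      rw [abs_mul, abs_two] at habs
      nlinarith [lb]
    linarith
  -- now integrate the pointwise estimate
  by_cases hint : IntervalIntegrable (fun t => |ξ t - ξn t|) volume 0 T
  · -- the majorant is interval integrable
    have hGm : Measurable (fun t => ∫ x in (-1:ℝ)..(1:ℝ), |ρ t x - ρn t x|) := by
      have hunc : Measurable (Function.uncurry (fun t x => |ρ t x - ρn t x|)) := by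
        apply Measurable.abs
        exact hρm.sub hρnm
      have : ∀ t, (∫ x in (-1:ℝ)..(1:ℝ), |ρ t x - ρn t x|)
          = ∫ x, |ρ t x - ρn t x| ∂(volume.restrict (Set.Ioc (-1:ℝ) 1)) := by
        intro t
        rw [intervalIntegral.integral_of_le (by norm_num : (-1:ℝ) ≤ 1)]
      simp only [this]
      exact (hunc.stronglyMeasurable.integral_prod_right).measurable
    have hGb : ∀ t, abs (∫ x in (-1:ℝ)..(1:ℝ), |ρ t x - ρn t x|) ≤ 2 := by
      intro t
      have : ‖∫ x in (-1:ℝ)..(1:ℝ), |ρ t x - ρn t x|‖ ≤ 1 * |(1:ℝ) - (-1)| := by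
        apply intervalIntegral.norm_integral_le_of_norm_le_const
        intro x _
        rw [Real.norm_eq_abs, abs_abs]
        have h1 := hρ t x; have h2 := hρn t x
        rw [abs_sub_le_iff]
        constructor <;> [linarith [h1.2, h2.1]; linarith [h1.1, h2.2]]
      rw [Real.norm_eq_abs] at this
      calc abs (∫ x in (-1:ℝ)..(1:ℝ), |ρ t x - ρn t x|) ≤ 1 * |(1:ℝ) - (-1)| := this
        _ = 2 := by norm_num
    have hGi : IntervalIntegrable (fun t => (L/2) * ∫ x in (-1:ℝ)..(1:ℝ), |ρ t x - ρn t x|)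
        volume 0 T :=
      (bdd_ii hGm hGb 0 T).const_mul (L/2)
    calc (∫ t in (0:ℝ)..T, |ξ t - ξn t|)
        ≤ ∫ t in (0:ℝ)..T, (L/2) * ∫ x in (-1:ℝ)..(1:ℝ), |ρ t x - ρn t x| :=
          intervalIntegral.integral_mono_on hT.le hint hGi key
      _ = (L / 2) * ∫ t in (0:ℝ)..T, ∫ x in (-1:ℝ)..(1:ℝ), |ρ t x - ρn t x| :=
          intervalIntegral.integral_const_mul _ _
  · rw [intervalIntegral.integral_undef hint]
    apply mul_nonneg (by linarith)
    apply intervalIntegral.integral_nonneg hT.le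
    intro t _
    apply intervalIntegral.integral_nonneg (by norm_num)
    intro x _
    exact abs_nonneg _
end

section
/- Let c : [0,1] → ℝ be Lipschitz with constant L and satisfy 1 ≤ c ≤ M. Fix ε > 0, T > 0, and measurable ρ₁, ρ₂ : [0,T] × (-1,1) → [0,1]. Let ξ₁, ξ₂ : [0,T] → (-1,1) solve −ε ξᵢ'(t) = ∫_{ξᵢ(t)}^1 c(ρᵢ(t,x)) dx − ∫_{-1}^{ξᵢ(t)} c(ρᵢ(t,x)) dx with the same initial value ξ₁(0) = ξ₂(0). Then sup_{t∈[0,T]} |ξ₁(t) − ξ₂(t)| ≤ (L/ε) e^{2TM/ε} ∫_0^T ∫_{-1}^1 |ρ₁(t,x) − ρ₂(t,x)| dx dt. -/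
open Set MeasureTheory intervalIntegral Real Filter

/-- Stability estimate for the relaxed turning-curve operator. -/
theorem stmt10 (ε T L M : ℝ) (hε : 0 < ε) (hT : 0 < T) (c : ℝ → ℝ)
    (hcL : ∀ u ∈ Set.Icc (0:ℝ) 1, ∀ v ∈ Set.Icc (0:ℝ) 1, |c u - c v| ≤ L * |u - v|)
    (hc : ∀ p ∈ Set.Icc (0:ℝ) 1, 1 ≤ c p ∧ c p ≤ M)
    (ρ₁ ρ₂ : ℝ → ℝ → ℝ)
    (hρ₁m : Measurable (Function.uncurry ρ₁)) (hρ₂m : Measurable (Function.uncurry ρ₂))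
    (hρ₁ : ∀ t x, ρ₁ t x ∈ Set.Icc (0:ℝ) 1) (hρ₂ : ∀ t x, ρ₂ t x ∈ Set.Icc (0:ℝ) 1)
    (ξ₁ ξ₂ : ℝ → ℝ)
    (hξ₁r : ∀ t ∈ Set.Icc 0 T, ξ₁ t ∈ Set.Ioo (-1:ℝ) 1)
    (hξ₂r : ∀ t ∈ Set.Icc 0 T, ξ₂ t ∈ Set.Ioo (-1:ℝ) 1)
    (hode₁ : ∀ t ∈ Set.Icc 0 T,
      HasDerivWithinAt ξ₁
        (-(1/ε) * ((∫ x in (ξ₁ t)..(1:ℝ), c (ρ₁ t x)) - ∫ x in (-1:ℝ)..(ξ₁ t), c (ρ₁ t x)))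
        (Set.Icc 0 T) t)
    (hode₂ : ∀ t ∈ Set.Icc 0 T,
      HasDerivWithinAt ξ₂
        (-(1/ε) * ((∫ x in (ξ₂ t)..(1:ℝ), c (ρ₂ t x)) - ∫ x in (-1:ℝ)..(ξ₂ t), c (ρ₂ t x)))
        (Set.Icc 0 T) t)
    (h0 : ξ₁ 0 = ξ₂ 0) :
    ∀ t ∈ Set.Icc 0 T, |ξ₁ t - ξ₂ t| ≤
      (L / ε) * Real.exp (2 * T * M / ε) *
        ∫ s in (0:ℝ)..T, ∫ x in (-1:ℝ)..(1:ℝ), |ρ₁ s x - ρ₂ s x| := by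
  -- basic constants
  have hM1 : (1:ℝ) ≤ M := le_trans (hc 0 ⟨le_rfl, zero_le_one⟩).1 (hc 0 ⟨le_rfl, zero_le_one⟩).2
  have hM0 : (0:ℝ) < M := lt_of_lt_of_le one_pos hM1
  have hL0 : (0:ℝ) ≤ L := by
    have h := hcL 0 ⟨le_rfl, zero_le_one⟩ 1 ⟨zero_le_one, le_rfl⟩
    have h2 := abs_nonneg (c 0 - c 1)
    rw [show (0:ℝ) - 1 = -1 by ring, abs_neg, abs_one, mul_one] at h
    linarith
  -- clamped coefficient function
  set cc : ℝ → ℝ := fun y => c (max 0 (min 1 y)) with hccdef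
  have hclamp_mem : ∀ y : ℝ, max 0 (min 1 y) ∈ Icc (0:ℝ) 1 :=
    fun y => ⟨le_max_left _ _, max_le zero_le_one (min_le_left _ _)⟩
  have hcc_eq : ∀ y ∈ Icc (0:ℝ) 1, cc y = c y := by
    intro y hy
    simp only [hccdef, min_eq_right hy.2, max_eq_right hy.1]
  have hcLip : LipschitzOnWith (Real.toNNReal L) c (Icc 0 1) := by
    apply LipschitzOnWith.of_dist_le_mul
    intro u hu v hv
    rw [Real.dist_eq, Real.dist_eq, Real.coe_toNNReal L hL0]
    exact hcL u hu v hv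
  have hccont : Continuous cc := by
    apply hcLip.continuousOn.comp_continuous
    · exact continuous_const.max (continuous_const.min continuous_id)
    · exact hclamp_mem
  have hcc_bounds : ∀ y : ℝ, 1 ≤ cc y ∧ cc y ≤ M := fun y => hc _ (hclamp_mem y)
  have hcc_absM : ∀ y : ℝ, |cc y| ≤ M := fun y =>
    abs_le.2 ⟨by linarith [(hcc_bounds y).1], (hcc_bounds y).2⟩
  have hcc₁ : ∀ s x, cc (ρ₁ s x) = c (ρ₁ s x) := fun s x => hcc_eq _ (hρ₁ s x)
  have hcc₂ : ∀ s x, cc (ρ₂ s x) = c (ρ₂ s x) := fun s x => hcc_eq _ (hρ₂ s x)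
  -- clamped time and curves
  set τ : ℝ → ℝ := fun s => max 0 (min T s) with hτdef
  have hτ_mem : ∀ s, τ s ∈ Icc (0:ℝ) T :=
    fun s => ⟨le_max_left _ _, max_le hT.le (min_le_left _ _)⟩
  have hτcont : Continuous τ := continuous_const.max (continuous_const.min continuous_id)
  have hτ_eq : ∀ s ∈ Icc (0:ℝ) T, τ s = s := by
    intro s hs; simp only [hτdef, min_eq_right hs.2, max_eq_right hs.1]
  have hξ₁cont : ContinuousOn ξ₁ (Icc 0 T) := fun s hs => (hode₁ s hs).continuousWithinAt
  have hξ₂cont : ContinuousOn ξ₂ (Icc 0 T) := fun s hs => (hode₂ s hs).continuousWithinAt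
  set ξt₁ : ℝ → ℝ := fun s => ξ₁ (τ s) with hξt₁def
  set ξt₂ : ℝ → ℝ := fun s => ξ₂ (τ s) with hξt₂def
  have hξt₁cont : Continuous ξt₁ := hξ₁cont.comp_continuous hτcont hτ_mem
  have hξt₂cont : Continuous ξt₂ := hξ₂cont.comp_continuous hτcont hτ_mem
  have hξt₁eq : ∀ s ∈ Icc (0:ℝ) T, ξt₁ s = ξ₁ s := by intro s hs; simp [hξt₁def, hτ_eq s hs]
  have hξt₂eq : ∀ s ∈ Icc (0:ℝ) T, ξt₂ s = ξ₂ s := by intro s hs; simp [hξt₂def, hτ_eq s hs]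
  have hξt₁r : ∀ s, ξt₁ s ∈ Ioo (-1:ℝ) 1 := fun s => hξ₁r _ (hτ_mem s)
  have hξt₂r : ∀ s, ξt₂ s ∈ Ioo (-1:ℝ) 1 := fun s => hξ₂r _ (hτ_mem s)
  -- measurability of integrands
  have Hm₁ : Measurable (fun p : ℝ × ℝ => cc (ρ₁ p.1 p.2)) := hccont.measurable.comp hρ₁m
  have Hm₂ : Measurable (fun p : ℝ × ℝ => cc (ρ₂ p.1 p.2)) := hccont.measurable.comp hρ₂m
  have hm₁ : ∀ s, Measurable (fun x => cc (ρ₁ s x)) := fun s => Hm₁.comp measurable_prodMk_left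
  have hm₂ : ∀ s, Measurable (fun x => cc (ρ₂ s x)) := fun s => Hm₂.comp measurable_prodMk_left
  have hrm : ∀ s, Measurable (fun x => |ρ₁ s x - ρ₂ s x|) := fun s =>
    ((hρ₁m.comp measurable_prodMk_left).sub (hρ₂m.comp measurable_prodMk_left)).abs
  -- generic interval integrability of bounded measurable functions
  have hii : ∀ (F : ℝ → ℝ), Measurable F → ∀ C : ℝ, (∀ x, |F x| ≤ C) →
      ∀ a b : ℝ, IntervalIntegrable F volume a b := by
    intro F hF C hC a b
    exact (_root_.intervalIntegrable_const (c := C)).mono_fun' hF.aestronglyMeasurable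
      (Eventually.of_forall fun x => by simpa using hC x)
  have hrabs1 : ∀ s x, |ρ₁ s x - ρ₂ s x| ≤ 1 := by
    intro s x
    have h1 := hρ₁ s x; have h2 := hρ₂ s x
    rw [abs_le]; constructor <;> [linarith [h1.1, h2.2]; linarith [h1.2, h2.1]]
  -- velocities
  set w₁ : ℝ → ℝ := fun s =>
    -(1/ε) * ((∫ x in (ξt₁ s)..(1:ℝ), cc (ρ₁ s x)) - ∫ x in (-1:ℝ)..(ξt₁ s), cc (ρ₁ s x))
    with hw₁def
  set w₂ : ℝ → ℝ := fun s =>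
    -(1/ε) * ((∫ x in (ξt₂ s)..(1:ℝ), cc (ρ₂ s x)) - ∫ x in (-1:ℝ)..(ξt₂ s), cc (ρ₂ s x))
    with hw₂def
  -- measurability of parametrized interval integrals with varying endpoint
  have hIntR : ∀ (η : ℝ → ℝ), Continuous η → (∀ s, η s ∈ Ioo (-1:ℝ) 1) →
      ∀ (h : ℝ → ℝ → ℝ), Measurable (fun p : ℝ × ℝ => h p.1 p.2) →
      Measurable (fun s => ∫ x in (η s)..(1:ℝ), h s x) := by
    intro η hη hηr h hh
    have key : (fun s => ∫ x in (η s)..(1:ℝ), h s x)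
        = fun s => ∫ x, ({p : ℝ × ℝ | η p.1 < p.2 ∧ p.2 ≤ 1}.indicator
            (fun p : ℝ × ℝ => h p.1 p.2)) (s, x) := by
      funext s
      rw [integral_of_le (hηr s).2.le, ← MeasureTheory.integral_indicator measurableSet_Ioc]
      simp only [Set.indicator_apply, Set.mem_Ioc, Set.mem_setOf_eq]
    rw [key]
    have hset : MeasurableSet {p : ℝ × ℝ | η p.1 < p.2 ∧ p.2 ≤ 1} :=
      (measurableSet_lt (hη.measurable.comp measurable_fst) measurable_snd).inter
        (measurableSet_le measurable_snd measurable_const)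
    exact ((hh.indicator hset).stronglyMeasurable.integral_prod_right').measurable
  have hIntL : ∀ (η : ℝ → ℝ), Continuous η → (∀ s, η s ∈ Ioo (-1:ℝ) 1) →
      ∀ (h : ℝ → ℝ → ℝ), Measurable (fun p : ℝ × ℝ => h p.1 p.2) →
      Measurable (fun s => ∫ x in (-1:ℝ)..(η s), h s x) := by
    intro η hη hηr h hh
    have key : (fun s => ∫ x in (-1:ℝ)..(η s), h s x)
        = fun s => ∫ x, ({p : ℝ × ℝ | -1 < p.2 ∧ p.2 ≤ η p.1}.indicator
            (fun p : ℝ × ℝ => h p.1 p.2)) (s, x) := by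
      funext s
      rw [integral_of_le (hηr s).1.le, ← MeasureTheory.integral_indicator measurableSet_Ioc]
      simp only [Set.indicator_apply, Set.mem_Ioc, Set.mem_setOf_eq]
    rw [key]
    have hset : MeasurableSet {p : ℝ × ℝ | -1 < p.2 ∧ p.2 ≤ η p.1} :=
      (measurableSet_lt measurable_const measurable_snd).inter
        (measurableSet_le measurable_snd (hη.measurable.comp measurable_fst))
    exact ((hh.indicator hset).stronglyMeasurable.integral_prod_right').measurable
  have hw₁m : Measurable w₁ := by
    apply Measurable.const_mul
    exact (hIntR ξt₁ hξt₁cont hξt₁r _ Hm₁).sub (hIntL ξt₁ hξt₁cont hξt₁r _ Hm₁)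
  have hw₂m : Measurable w₂ := by
    apply Measurable.const_mul
    exact (hIntR ξt₂ hξt₂cont hξt₂r _ Hm₂).sub (hIntL ξt₂ hξt₂cont hξt₂r _ Hm₂)
  -- bounds on velocities
  have hIbound : ∀ (h : ℝ → ℝ) (a b : ℝ), (∀ x, |h x| ≤ M) → a ∈ Icc (-1:ℝ) 1 →
      b ∈ Icc (-1:ℝ) 1 → |∫ x in a..b, h x| ≤ 2 * M := by
    intro h a b hb ha hbb
    have := intervalIntegral.norm_integral_le_of_norm_le_const
      (C := M) (f := h) (a := a) (b := b) (fun x _ => by simpa using hb x)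
    rw [Real.norm_eq_abs] at this
    refine this.trans ?_
    have : |b - a| ≤ 2 := by
      rw [abs_le]
      constructor <;> [linarith [hbb.1, ha.2]; linarith [hbb.2, ha.1]]
    nlinarith
  have hw₁b : ∀ s, |w₁ s| ≤ 4 * M / ε := by
    intro s
    have h1 := hIbound (fun x => cc (ρ₁ s x)) (ξt₁ s) 1 (fun x => hcc_absM _)
      ⟨(hξt₁r s).1.le, (hξt₁r s).2.le⟩ ⟨by norm_num, le_rfl⟩
    have h2 := hIbound (fun x => cc (ρ₁ s x)) (-1) (ξt₁ s) (fun x => hcc_absM _)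
      ⟨le_rfl, by norm_num⟩ ⟨(hξt₁r s).1.le, (hξt₁r s).2.le⟩
    have : |w₁ s| = (1/ε) * |(∫ x in (ξt₁ s)..(1:ℝ), cc (ρ₁ s x)) -
        ∫ x in (-1:ℝ)..(ξt₁ s), cc (ρ₁ s x)| := by
      rw [hw₁def, abs_mul, abs_neg, abs_of_pos (by positivity : (0:ℝ) < 1/ε)]
    have h3 : |(∫ x in (ξt₁ s)..(1:ℝ), cc (ρ₁ s x)) -
        ∫ x in (-1:ℝ)..(ξt₁ s), cc (ρ₁ s x)| ≤ 4 * M :=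
      le_trans (abs_sub _ _) (by linarith)
    rw [this]
    calc (1/ε) * |(∫ x in (ξt₁ s)..(1:ℝ), cc (ρ₁ s x)) -
          ∫ x in (-1:ℝ)..(ξt₁ s), cc (ρ₁ s x)|
        ≤ (1/ε) * (4 * M) := mul_le_mul_of_nonneg_left h3 (by positivity)
      _ = 4 * M / ε := by ring
  have hw₂b : ∀ s, |w₂ s| ≤ 4 * M / ε := by
    intro s
    have h1 := hIbound (fun x => cc (ρ₂ s x)) (ξt₂ s) 1 (fun x => hcc_absM _)
      ⟨(hξt₂r s).1.le, (hξt₂r s).2.le⟩ ⟨by norm_num, le_rfl⟩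
    have h2 := hIbound (fun x => cc (ρ₂ s x)) (-1) (ξt₂ s) (fun x => hcc_absM _)
      ⟨le_rfl, by norm_num⟩ ⟨(hξt₂r s).1.le, (hξt₂r s).2.le⟩
    have heq : |w₂ s| = (1/ε) * |(∫ x in (ξt₂ s)..(1:ℝ), cc (ρ₂ s x)) -
        ∫ x in (-1:ℝ)..(ξt₂ s), cc (ρ₂ s x)| := by
      rw [hw₂def, abs_mul, abs_neg, abs_of_pos (by positivity : (0:ℝ) < 1/ε)]
    have h3 : |(∫ x in (ξt₂ s)..(1:ℝ), cc (ρ₂ s x)) -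
        ∫ x in (-1:ℝ)..(ξt₂ s), cc (ρ₂ s x)| ≤ 4 * M :=
      le_trans (abs_sub _ _) (by linarith)
    rw [heq]
    calc (1/ε) * |(∫ x in (ξt₂ s)..(1:ℝ), cc (ρ₂ s x)) -
          ∫ x in (-1:ℝ)..(ξt₂ s), cc (ρ₂ s x)|
        ≤ (1/ε) * (4 * M) := mul_le_mul_of_nonneg_left h3 (by positivity)
      _ = 4 * M / ε := by ring
  -- the spatial L¹ distance
  set g : ℝ → ℝ := fun s => ∫ x in (-1:ℝ)..(1:ℝ), |ρ₁ s x - ρ₂ s x| with hgdef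
  have hgm : Measurable g := by
    have key : g = fun s => ∫ x in Ioc (-1:ℝ) 1,
        (fun p : ℝ × ℝ => |ρ₁ p.1 p.2 - ρ₂ p.1 p.2|) (s, x) := by
      funext s
      show (∫ x in (-1:ℝ)..(1:ℝ), |ρ₁ s x - ρ₂ s x|) = _
      rw [integral_of_le (by norm_num : (-1:ℝ) ≤ 1)]
    rw [key]
    exact ((hρ₁m.sub hρ₂m).abs.stronglyMeasurable.integral_prod_right').measurable
  have hg0 : ∀ s, 0 ≤ g s := fun s =>
    intervalIntegral.integral_nonneg (by norm_num) (fun x _ => abs_nonneg _)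
  have hg2 : ∀ s, g s ≤ 2 := by
    intro s
    have : g s ≤ ∫ x in (-1:ℝ)..(1:ℝ), (1:ℝ) :=
      intervalIntegral.integral_mono_on (by norm_num)
        (hii _ (hrm s) 1 (fun x => by simpa using hrabs1 s x) _ _)
        _root_.intervalIntegrable_const (fun x _ => hrabs1 s x)
    norm_num at this
    linarith
  -- key pointwise estimate on the difference of velocities
  have hkeyE : ∀ s ∈ Icc (0:ℝ) T,
      |w₁ s - w₂ s| ≤ (2*M/ε) * |ξ₁ s - ξ₂ s| + (L/ε) * g s := by
    intro s hs
    set a := ξ₁ s with hadef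
    set b := ξ₂ s with hbdef
    have haR : a ∈ Ioo (-1:ℝ) 1 := hξ₁r s hs
    have hbR : b ∈ Ioo (-1:ℝ) 1 := hξ₂r s hs
    set h1 : ℝ → ℝ := fun x => cc (ρ₁ s x) with hh1def
    set h2 : ℝ → ℝ := fun x => cc (ρ₂ s x) with hh2def
    have ih1 : ∀ p q : ℝ, IntervalIntegrable h1 volume p q :=
      hii h1 (hm₁ s) M (fun x => hcc_absM _)
    have ih2 : ∀ p q : ℝ, IntervalIntegrable h2 volume p q :=
      hii h2 (hm₂ s) M (fun x => hcc_absM _)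
    have ihΔ : ∀ p q : ℝ, IntervalIntegrable (fun x => |h1 x - h2 x|) volume p q :=
      hii _ ((hm₁ s).sub (hm₂ s)).abs (2*M)
        (fun x => by
          rw [abs_abs]
          exact le_trans (abs_sub _ _) (by linarith [hcc_absM (ρ₁ s x), hcc_absM (ρ₂ s x)]))
    -- the integral identity
    have E1 : (∫ x in a..b, h2 x) + (∫ x in b..(1:ℝ), h2 x) = ∫ x in a..(1:ℝ), h2 x :=
      integral_add_adjacent_intervals (ih2 a b) (ih2 b 1)
    have E2 : (∫ x in (-1:ℝ)..a, h2 x) + (∫ x in a..b, h2 x) = ∫ x in (-1:ℝ)..b, h2 x :=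
      integral_add_adjacent_intervals (ih2 (-1) a) (ih2 a b)
    have E3 : ∫ x in a..(1:ℝ), (h1 x - h2 x)
        = (∫ x in a..(1:ℝ), h1 x) - ∫ x in a..(1:ℝ), h2 x :=
      integral_sub (ih1 a 1) (ih2 a 1)
    have E4 : ∫ x in (-1:ℝ)..a, (h1 x - h2 x)
        = (∫ x in (-1:ℝ)..a, h1 x) - ∫ x in (-1:ℝ)..a, h2 x :=
      integral_sub (ih1 (-1) a) (ih2 (-1) a)
    -- estimates for the Δ integrals
    have e1 : |∫ x in a..(1:ℝ), (h1 x - h2 x)| ≤ ∫ x in a..(1:ℝ), |h1 x - h2 x| :=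
      intervalIntegral.abs_integral_le_integral_abs haR.2.le
    have e2 : |∫ x in (-1:ℝ)..a, (h1 x - h2 x)| ≤ ∫ x in (-1:ℝ)..a, |h1 x - h2 x| :=
      intervalIntegral.abs_integral_le_integral_abs haR.1.le
    have e3 : (∫ x in (-1:ℝ)..a, |h1 x - h2 x|) + (∫ x in a..(1:ℝ), |h1 x - h2 x|)
        = ∫ x in (-1:ℝ)..(1:ℝ), |h1 x - h2 x| :=
      integral_add_adjacent_intervals (ihΔ (-1) a) (ihΔ a 1)
    have e4 : (∫ x in (-1:ℝ)..(1:ℝ), |h1 x - h2 x|) ≤ L * g s := by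
      have hmono : (∫ x in (-1:ℝ)..(1:ℝ), |h1 x - h2 x|)
          ≤ ∫ x in (-1:ℝ)..(1:ℝ), L * |ρ₁ s x - ρ₂ s x| := by
        apply intervalIntegral.integral_mono_on (by norm_num) (ihΔ (-1) 1)
        · refine hii _ (measurable_const.mul (hrm s)) L (fun x => ?_) (-1) 1
          show |L * (|ρ₁ s x - ρ₂ s x|)| ≤ L
          rw [abs_mul, abs_of_nonneg hL0, abs_abs]
          calc L * |ρ₁ s x - ρ₂ s x| ≤ L * 1 :=
                mul_le_mul_of_nonneg_left (hrabs1 s x) hL0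
            _ = L := mul_one L
        · intro x _
          rw [hh1def, hh2def]
          simp only [hcc₁, hcc₂]
          exact hcL _ (hρ₁ s x) _ (hρ₂ s x)
      rw [hgdef]
      rwa [intervalIntegral.integral_const_mul] at hmono
    have e5 : |∫ x in a..b, h2 x| ≤ M * |b - a| := by
      have := intervalIntegral.norm_integral_le_of_norm_le_const
        (C := M) (f := h2) (a := a) (b := b) (fun x _ => by simpa using hcc_absM _)
      simpa [Real.norm_eq_abs] using this
    -- assemble
    have hD : w₁ s - w₂ s = -(1/ε) * (((∫ x in a..(1:ℝ), (h1 x - h2 x))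
        - ∫ x in (-1:ℝ)..a, (h1 x - h2 x)) + 2 * ∫ x in a..b, h2 x) := by
      rw [hw₁def, hw₂def]
      simp only [hξt₁eq s hs, hξt₂eq s hs, ← hadef, ← hbdef, ← hh1def, ← hh2def]
      rw [E3, E4]
      have hlin1 : (∫ x in b..(1:ℝ), h2 x) = (∫ x in a..(1:ℝ), h2 x) - ∫ x in a..b, h2 x := by
        linarith
      have hlin2 : (∫ x in (-1:ℝ)..b, h2 x)
          = (∫ x in (-1:ℝ)..a, h2 x) + ∫ x in a..b, h2 x := by linarith
      rw [hlin1, hlin2]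
      ring
    have hDabs : |w₁ s - w₂ s| ≤ (1/ε) * ((L * g s) + 2 * (M * |b - a|)) := by
      rw [hD, abs_mul, abs_neg, abs_of_pos (by positivity : (0:ℝ) < 1/ε)]
      apply mul_le_mul_of_nonneg_left _ (by positivity)
      have t1 : |((∫ x in a..(1:ℝ), (h1 x - h2 x)) - ∫ x in (-1:ℝ)..a, (h1 x - h2 x))
          + 2 * ∫ x in a..b, h2 x|
          ≤ |(∫ x in a..(1:ℝ), (h1 x - h2 x)) - ∫ x in (-1:ℝ)..a, (h1 x - h2 x)|
            + 2 * |∫ x in a..b, h2 x| := by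
        refine le_trans (abs_add_le _ _) ?_
        rw [abs_mul]
        norm_num
      have t2 : |(∫ x in a..(1:ℝ), (h1 x - h2 x)) - ∫ x in (-1:ℝ)..a, (h1 x - h2 x)|
          ≤ ∫ x in (-1:ℝ)..(1:ℝ), |h1 x - h2 x| := by
        refine le_trans (abs_sub _ _) ?_
        rw [← e3]
        linarith
      linarith
    rw [abs_sub_comm b a] at hDabs
    calc |w₁ s - w₂ s| ≤ (1/ε) * ((L * g s) + 2 * (M * |a - b|)) := hDabs
      _ = (2*M/ε) * |a - b| + (L/ε) * g s := by ring
  -- velocity difference and its integrability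
  set w : ℝ → ℝ := fun s => w₁ s - w₂ s with hwdef
  have hwm : Measurable w := hw₁m.sub hw₂m
  have hwb : ∀ s, |w s| ≤ 8*M/ε := by
    intro s
    calc |w s| = |w₁ s - w₂ s| := by rw [hwdef]
      _ ≤ |w₁ s| + |w₂ s| := abs_sub _ _
      _ ≤ 4*M/ε + 4*M/ε := add_le_add (hw₁b s) (hw₂b s)
      _ = 8*M/ε := by ring
  have hwint : ∀ p q : ℝ, IntervalIntegrable w volume p q := hii w hwm (8*M/ε) hwb
  have habsint : ∀ p q : ℝ, IntervalIntegrable (fun s => |w s|) volume p q :=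
    hii _ hwm.abs (8*M/ε) (fun s => by rw [abs_abs]; exact hwb s)
  -- f has right derivative w on (0,T)
  have hfd : ∀ s ∈ Ioo (0:ℝ) T, HasDerivWithinAt (fun u => ξ₁ u - ξ₂ u) (w s) (Ioi s) s := by
    intro s hs
    have hsIcc : s ∈ Icc (0:ℝ) T := ⟨hs.1.le, hs.2.le⟩
    have hd := (hode₁ s hsIcc).sub (hode₂ s hsIcc)
    have hval : w s = -(1/ε) * ((∫ x in (ξ₁ s)..(1:ℝ), c (ρ₁ s x))
          - ∫ x in (-1:ℝ)..(ξ₁ s), c (ρ₁ s x))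
        - -(1/ε) * ((∫ x in (ξ₂ s)..(1:ℝ), c (ρ₂ s x))
          - ∫ x in (-1:ℝ)..(ξ₂ s), c (ρ₂ s x)) := by
      rw [hwdef, hw₁def, hw₂def]
      simp only [hξt₁eq s hsIcc, hξt₂eq s hsIcc, hcc₁, hcc₂]
    rw [hval]
    have hmem : Icc (0:ℝ) T ∈ nhdsWithin s (Ioi s) :=
      Filter.mem_of_superset (Ioc_mem_nhdsGT_of_mem ⟨le_refl s, hs.2⟩)
        (fun u hu => ⟨le_trans hs.1.le hu.1.le, hu.2⟩)
    exact hd.mono_of_mem_nhdsWithin hmem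
  -- FTC
  have hFTC : ∀ t ∈ Icc (0:ℝ) T, ξ₁ t - ξ₂ t = ∫ s in (0:ℝ)..t, w s := by
    intro t ht
    have hcont : ContinuousOn (fun u => ξ₁ u - ξ₂ u) (Icc 0 t) :=
      (hξ₁cont.sub hξ₂cont).mono (Icc_subset_Icc le_rfl ht.2)
    have hderiv : ∀ s ∈ Ioo (0:ℝ) t, HasDerivWithinAt (fun u => ξ₁ u - ξ₂ u) (w s) (Ioi s) s :=
      fun s hs => hfd s ⟨hs.1, lt_of_lt_of_le hs.2 ht.2⟩
    have := integral_eq_sub_of_hasDeriv_right_of_le ht.1 hcont hderiv (hwint 0 t)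
    rw [this, h0]
    ring
  -- the comparison function
  set φ : ℝ → ℝ := fun s => (2*M/ε) * |ξt₁ s - ξt₂ s| + (L/ε) * g s with hφdef
  have hφm : Measurable φ :=
    (measurable_const.mul (hξt₁cont.sub hξt₂cont).abs.measurable).add
      (measurable_const.mul hgm)
  have hξtb : ∀ s, |ξt₁ s - ξt₂ s| ≤ 2 := by
    intro s
    have h1 := hξt₁r s; have h2 := hξt₂r s
    rw [abs_le]
    constructor <;> [linarith [h1.1, h2.2]; linarith [h1.2, h2.1]]
  have hφint : ∀ p q : ℝ, IntervalIntegrable φ volume p q := by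
    refine hii φ hφm (2*M/ε * 2 + L/ε * 2) (fun s => ?_)
    have hφ0 : 0 ≤ φ s := by
      simp only [hφdef]
      exact add_nonneg (mul_nonneg (by positivity) (abs_nonneg _))
        (mul_nonneg (by positivity) (hg0 s))
    rw [abs_of_nonneg hφ0]
    simp only [hφdef]
    have c1 : (2*M/ε) * |ξt₁ s - ξt₂ s| ≤ 2*M/ε * 2 :=
      mul_le_mul_of_nonneg_left (hξtb s) (by positivity)
    have c2 : (L/ε) * g s ≤ L/ε * 2 :=
      mul_le_mul_of_nonneg_left (hg2 s) (by positivity)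
    linarith
  -- bound |ξ₁ t - ξ₂ t| by ∫ φ
  have habs : ∀ t ∈ Icc (0:ℝ) T, |ξ₁ t - ξ₂ t| ≤ ∫ s in (0:ℝ)..t, φ s := by
    intro t ht
    rw [hFTC t ht]
    refine le_trans (intervalIntegral.abs_integral_le_integral_abs ht.1) ?_
    apply intervalIntegral.integral_mono_on ht.1 (habsint 0 t) (hφint 0 t)
    intro s hs
    have hsT : s ∈ Icc (0:ℝ) T := ⟨hs.1, le_trans hs.2 ht.2⟩
    calc |w s| = |w₁ s - w₂ s| := by rw [hwdef]
      _ ≤ (2*M/ε) * |ξ₁ s - ξ₂ s| + (L/ε) * g s := hkeyE s hsT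
      _ = φ s := by simp only [hφdef]; rw [hξt₁eq s hsT, hξt₂eq s hsT]
  -- split the φ integral
  set B : ℝ := ∫ s in (0:ℝ)..T, g s with hBdef
  have hB0 : 0 ≤ B := intervalIntegral.integral_nonneg hT.le (fun s _ => hg0 s)
  set F : ℝ → ℝ := fun t => ∫ s in (0:ℝ)..t, |ξt₁ s - ξt₂ s| with hFdef
  have hfabsint : ∀ p q : ℝ, IntervalIntegrable (fun s => |ξt₁ s - ξt₂ s|) volume p q :=
    fun p q => ((hξt₁cont.sub hξt₂cont).abs.intervalIntegrable p q)
  have hgint : ∀ p q : ℝ, IntervalIntegrable g volume p q :=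
    hii g hgm 2 (fun s => by rw [abs_of_nonneg (hg0 s)]; exact hg2 s)
  have hφsplit : ∀ t : ℝ, (∫ s in (0:ℝ)..t, φ s)
      = (2*M/ε) * F t + (L/ε) * ∫ s in (0:ℝ)..t, g s := by
    intro t
    simp only [hφdef, hFdef]
    rw [intervalIntegral.integral_add ((hfabsint 0 t).const_mul _) ((hgint 0 t).const_mul _)]
    rw [intervalIntegral.integral_const_mul, intervalIntegral.integral_const_mul]
  have hgmono : ∀ t ∈ Icc (0:ℝ) T, (∫ s in (0:ℝ)..t, g s) ≤ B := by
    intro t ht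
    rw [hBdef]
    exact intervalIntegral.integral_mono_interval le_rfl ht.1 ht.2
      (Eventually.of_forall (fun s => hg0 s)) (hgint 0 T)
  have hmain : ∀ t ∈ Icc (0:ℝ) T, |ξ₁ t - ξ₂ t| ≤ (2*M/ε) * F t + (L/ε) * B := by
    intro t ht
    refine (habs t ht).trans ?_
    rw [hφsplit t]
    have hLε : (0:ℝ) ≤ L/ε := by positivity
    exact add_le_add le_rfl (mul_le_mul_of_nonneg_left (hgmono t ht) hLε)
  -- FTC-1 for F and Gronwall
  have hFd : ∀ t : ℝ, HasDerivAt F (|ξt₁ t - ξt₂ t|) t := by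
    intro t
    exact intervalIntegral.integral_hasDerivAt_right (hfabsint 0 t)
      ((hξt₁cont.sub hξt₂cont).abs.stronglyMeasurableAtFilter _ _)
      (hξt₁cont.sub hξt₂cont).abs.continuousAt
  have hFcont : Continuous F := continuous_iff_continuousAt.2 (fun t => (hFd t).continuousAt)
  have hF0 : ∀ t : ℝ, 0 ≤ t → 0 ≤ F t := fun t ht =>
    intervalIntegral.integral_nonneg ht (fun s _ => abs_nonneg _)
  set K : ℝ := 2*M/ε with hKdef
  have hK0 : 0 < K := by rw [hKdef]; positivity
  set A : ℝ := (L/ε) * B with hAdef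
  have hA0 : 0 ≤ A := mul_nonneg (by positivity) hB0
  have hGr : ∀ t ∈ Icc (0:ℝ) T, ‖F t‖ ≤ gronwallBound 0 K A (t - 0) := by
    apply norm_le_gronwallBound_of_norm_deriv_right_le hFcont.continuousOn
      (fun s _ => (hFd s).hasDerivWithinAt)
    · simp [hFdef]
    · intro s hs
      have hsIcc : s ∈ Icc (0:ℝ) T := ⟨hs.1, hs.2.le⟩
      rw [Real.norm_eq_abs, Real.norm_eq_abs, abs_abs, abs_of_nonneg (hF0 s hs.1)]
      rw [hξt₁eq s hsIcc, hξt₂eq s hsIcc]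
      exact hmain s hsIcc
  -- conclusion
  intro t ht
  have hFt := hGr t ht
  rw [Real.norm_eq_abs, abs_of_nonneg (hF0 t ht.1), gronwallBound_of_K_ne_0 hK0.ne'] at hFt
  have hfin : |ξ₁ t - ξ₂ t| ≤ A * Real.exp (K * t) := by
    have h1 := hmain t ht
    have h2 : K * F t ≤ K * (0 * Real.exp (K * (t-0)) + A / K * (Real.exp (K * (t-0)) - 1)) :=
      mul_le_mul_of_nonneg_left hFt hK0.le
    have h3 : K * (0 * Real.exp (K * (t-0)) + A / K * (Real.exp (K * (t-0)) - 1))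
        = A * Real.exp (K * t) - A := by
      rw [show K * (t - 0) = K * t by ring]
      field_simp
      ring
    linarith
  have hexp : Real.exp (K * t) ≤ Real.exp (K * T) :=
    Real.exp_le_exp.2 (mul_le_mul_of_nonneg_left ht.2 hK0.le)
  have hfin2 : |ξ₁ t - ξ₂ t| ≤ A * Real.exp (K * T) :=
    hfin.trans (mul_le_mul_of_nonneg_left hexp hA0)
  refine hfin2.trans (le_of_eq ?_)
  rw [hAdef, hKdef]
  rw [show 2*M/ε*T = 2*T*M/ε by ring]
  ring
end

section
/- Let f : [0,1] → ℝ be Lipschitz with constant L_f, concave, with f(0) = f(1) = 0. Set f_R = f and f_L = −f, and for s ∈ ℝ define g_R(x) = f_R(x) − s·x and g_L(x) = f_L(x) − s·x on [0,1]. Define Γ_R = {a ∈ [0,1] : ∃ b ∈ [0,1], b ≠ a, g_R(a) = g_R(b)} and Γ_L analogously with g_L. Then for all a, a' ∈ Γ_R and b, b' ∈ Γ_L with g_R(a) = g_L(b) and g_R(a') = g_L(b'): sign(a − a')·sign(g_R(a) − g_R(a')) = sign(b − b')·sign(g_L(b) − g_L(b')). -/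
/-- For a concave function on `[0,1]`, if a value is attained at two distinct
points, then it dominates the boundary values. -/
lemma key_half (g : ℝ → ℝ) (hg : ConcaveOn ℝ (Set.Icc 0 1) g) {a b : ℝ}
    (ha : a ∈ Set.Icc (0:ℝ) 1) (hb : b ∈ Set.Icc (0:ℝ) 1) (hlt : a < b)
    (hab : g a = g b) : g 0 ≤ g a ∧ g 1 ≤ g a := by
  obtain ⟨ha0, ha1⟩ := ha
  obtain ⟨hb0, hb1⟩ := hb
  have hbpos : 0 < b := lt_of_le_of_lt ha0 hlt
  constructor
  · -- a = ((b-a)/b) • 0 + (a/b) • b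
    have h0m : (0:ℝ) ∈ Set.Icc (0:ℝ) 1 := by constructor <;> norm_num
    have htpos : 0 < (b - a) / b := div_pos (by linarith) hbpos
    have ht : (0:ℝ) ≤ (b - a) / b := htpos.le
    have hu : (0:ℝ) ≤ a / b := div_nonneg ha0 hbpos.le
    have htu : (b - a) / b + a / b = 1 := by field_simp; ring
    have := hg.2 h0m ⟨hb0, hb1⟩ ht hu htu
    simp only [smul_eq_mul, mul_zero, zero_add] at this
    have hx : a / b * b = a := by field_simp
    rw [hx, ← hab] at this
    have hsum : (b - a) / b * g a + a / b * g a = g a := by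
      rw [← add_mul, htu, one_mul]
    have h2 : (b - a) / b * g 0 ≤ (b - a) / b * g a := by linarith
    exact (mul_le_mul_iff_right₀ htpos).mp h2
  · rcases eq_or_lt_of_le hb1 with h | h
    · rw [hab, h]
    · -- b = ((1-b)/(1-a)) • a + ((b-a)/(1-a)) • 1
      have h1a : 0 < 1 - a := by linarith
      have h1m : (1:ℝ) ∈ Set.Icc (0:ℝ) 1 := by constructor <;> norm_num
      have hupos : 0 < (b - a) / (1 - a) := div_pos (by linarith) h1a
      have ht : (0:ℝ) ≤ (1 - b) / (1 - a) := div_nonneg (by linarith) h1a.le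
      have hu : (0:ℝ) ≤ (b - a) / (1 - a) := hupos.le
      have htu : (1 - b) / (1 - a) + (b - a) / (1 - a) = 1 := by field_simp; ring
      have := hg.2 ⟨ha0, ha1⟩ h1m ht hu htu
      simp only [smul_eq_mul, mul_one] at this
      have hx : (1 - b) / (1 - a) * a + (b - a) / (1 - a) = b := by
        field_simp; ring
      rw [hx, ← hab] at this
      have hsum : (1 - b) / (1 - a) * g a + (b - a) / (1 - a) * g a = g a := by
        rw [← add_mul, htu, one_mul]
      have h2 : (b - a) / (1 - a) * g 1 ≤ (b - a) / (1 - a) * g a := by linarith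
      exact (mul_le_mul_iff_right₀ hupos).mp h2

lemma key (g : ℝ → ℝ) (hg : ConcaveOn ℝ (Set.Icc 0 1) g) {a b : ℝ}
    (ha : a ∈ Set.Icc (0:ℝ) 1) (hb : b ∈ Set.Icc (0:ℝ) 1) (hne : b ≠ a)
    (hab : g a = g b) : g 0 ≤ g a ∧ g 1 ≤ g a := by
  rcases lt_or_gt_of_ne hne with h | h
  · have := key_half g hg hb ha h hab.symm
    rw [← hab] at this; exact this
  · exact key_half g hg ha hb h hab

/-- On the Rankine–Hugoniot compatible sets, the shifted right flux has the same
monotonicity as the shifted left flux ("sign" identity). -/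
theorem stmt12 (Lf : ℝ) (f : ℝ → ℝ)
    (hlip : ∀ u ∈ Set.Icc (0:ℝ) 1, ∀ v ∈ Set.Icc (0:ℝ) 1, |f u - f v| ≤ Lf * |u - v|)
    (hconc : ConcaveOn ℝ (Set.Icc 0 1) f) (h0 : f 0 = 0) (h1 : f 1 = 0) (s : ℝ) :
    ∀ a ∈ {a ∈ Set.Icc (0:ℝ) 1 | ∃ b ∈ Set.Icc (0:ℝ) 1, b ≠ a ∧ f a - s * a = f b - s * b},
    ∀ a' ∈ {a ∈ Set.Icc (0:ℝ) 1 | ∃ b ∈ Set.Icc (0:ℝ) 1, b ≠ a ∧ f a - s * a = f b - s * b},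
    ∀ b ∈ {a ∈ Set.Icc (0:ℝ) 1 | ∃ b' ∈ Set.Icc (0:ℝ) 1, b' ≠ a ∧ -f a - s * a = -f b' - s * b'},
    ∀ b' ∈ {a ∈ Set.Icc (0:ℝ) 1 | ∃ b' ∈ Set.Icc (0:ℝ) 1, b' ≠ a ∧ -f a - s * a = -f b' - s * b'},
      f a - s * a = -f b - s * b →
      f a' - s * a' = -f b' - s * b' →
      Real.sign (a - a') * Real.sign ((f a - s * a) - (f a' - s * a')) =
        Real.sign (b - b') * Real.sign ((-f b - s * b) - (-f b' - s * b')) := by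
  -- the two shifted fluxes (as concave functions)
  set gR : ℝ → ℝ := fun x => f x - s * x with hgR
  set gP : ℝ → ℝ := fun x => f x + s * x with hgP
  have hgRc : ConcaveOn ℝ (Set.Icc 0 1) gR := by
    refine ⟨convex_Icc 0 1, fun x hx y hy p q hp hq hpq => ?_⟩
    have := hconc.2 hx hy hp hq hpq
    simp only [smul_eq_mul, hgR] at *
    nlinarith [this]
  have hgPc : ConcaveOn ℝ (Set.Icc 0 1) gP := by
    refine ⟨convex_Icc 0 1, fun x hx y hy p q hp hq hpq => ?_⟩
    have := hconc.2 hx hy hp hq hpq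
    simp only [smul_eq_mul, hgP] at *
    nlinarith [this]
  intro a ha a' ha' b hb b' hb' hab hab'
  obtain ⟨haI, c, hcI, hcne, hceq⟩ := ha
  obtain ⟨haI', c', hcI', hcne', hceq'⟩ := ha'
  obtain ⟨hbI, d, hdI, hdne, hdeq⟩ := hb
  obtain ⟨hbI', d', hdI', hdne', hdeq'⟩ := hb'
  -- values of gR on Γ_R dominate boundary values (0 and -s)
  have hRa := key gR hgRc haI hcI hcne hceq
  have hRa' := key gR hgRc haI' hcI' hcne' hceq'
  -- values of gP on points of Γ_L dominate boundary values
  have hbeq : gP b = gP d := by simp only [hgP]; linarith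
  have hbeq' : gP b' = gP d' := by simp only [hgP]; linarith
  have hPb := key gP hgPc hbI hdI hdne hbeq
  have hPb' := key gP hgPc hbI' hdI' hdne' hbeq'
  simp only [hgR, hgP, h0, h1, mul_zero, mul_one, sub_zero, add_zero] at hRa hRa' hPb hPb'
  -- from RH equality, all values are zero
  have hza : f a - s * a = 0 := by
    have h1' : (0:ℝ) ≤ f a - s * a := by linarith [hRa.1]
    have h2' : f b + s * b ≥ 0 := by linarith [hPb.1]
    linarith
  have hza' : f a' - s * a' = 0 := by
    have h1' : (0:ℝ) ≤ f a' - s * a' := by linarith [hRa'.1]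
    have h2' : f b' + s * b' ≥ 0 := by linarith [hPb'.1]
    linarith
  have e1 : (f a - s * a) - (f a' - s * a') = 0 := by rw [hza, hza']; ring
  have e2 : (-f b - s * b) - (-f b' - s * b') = 0 := by
    have : -f b - s * b = 0 := by rw [← hab]; exact hza
    have h2 : -f b' - s * b' = 0 := by rw [← hab']; exact hza'
    rw [this, h2]; ring
  rw [e1, e2, Real.sign_zero, mul_zero, mul_zero]
end

section
/- Let c : [0,1] → ℝ be differentiable with 0 < α̲ ≤ c'(u) ≤ ᾱ for a.e. u ∈ [0,1], and let u, v : ℝ → [0,1] be measurable. Then for any interval I ⊂ ℝ, |∫_I (c(u(x)) − c(v(x))) dx| ≤ ((ᾱ+α̲)/2)|∫_I (u(x) − v(x)) dx| + ((ᾱ−α̲)/2) ∫_I |u(x) − v(x)| dx. -/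
open MeasureTheory

/-- Splitting estimate for costs with derivative pinched between α̲ and ᾱ. -/
theorem stmt17 (αl αu : ℝ) (hαl : 0 < αl) (c c' : ℝ → ℝ)
    (hderiv : ∀ u ∈ Set.Icc (0:ℝ) 1, HasDerivAt c (c' u) u)
    (hbound : ∀ᵐ u ∂(volume.restrict (Set.Icc (0:ℝ) 1)), αl ≤ c' u ∧ c' u ≤ αu)
    (u v : ℝ → ℝ) (hum : Measurable u) (hvm : Measurable v)
    (hu : ∀ x, u x ∈ Set.Icc (0:ℝ) 1) (hv : ∀ x, v x ∈ Set.Icc (0:ℝ) 1)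
    (a b : ℝ) (hab : a ≤ b) :
    |∫ x in a..b, (c (u x) - c (v x))| ≤
      ((αu + αl) / 2) * |∫ x in a..b, (u x - v x)| +
        ((αu - αl) / 2) * ∫ x in a..b, |u x - v x| := by
  -- αl ≤ αu
  have hne : (volume.restrict (Set.Icc (0:ℝ) 1)) ≠ 0 := by
    simp [Measure.restrict_eq_zero]
  haveI : (ae (volume.restrict (Set.Icc (0:ℝ) 1))).NeBot := ae_neBot.mpr hne
  obtain ⟨u0, hu0, hu0'⟩ := hbound.exists
  have hαlu : αl ≤ αu := le_trans hu0 hu0'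
  -- deriv c equals c' on Icc
  have hderiv' : ∀ x ∈ Set.Icc (0:ℝ) 1, deriv c x = c' x := fun x hx => (hderiv x hx).deriv
  have hbd : ∀ᵐ x ∂(volume.restrict (Set.Icc (0:ℝ) 1)),
      αl ≤ deriv c x ∧ deriv c x ≤ αu := by
    filter_upwards [hbound, ae_restrict_mem measurableSet_Icc] with x hx hmem
    rw [hderiv' x hmem]; exact hx
  -- monotonicity-type bounds via FTC
  have mono : ∀ t ∈ Set.Icc (0:ℝ) 1, ∀ s ∈ Set.Icc (0:ℝ) 1, t ≤ s →
      αl * (s - t) ≤ c s - c t ∧ c s - c t ≤ αu * (s - t) := by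
    intro t ht s hs hts
    have hsub : Set.Icc t s ⊆ Set.Icc (0:ℝ) 1 := Set.Icc_subset_Icc ht.1 hs.2
    have hbd' : ∀ᵐ x ∂(volume.restrict (Set.Icc t s)),
        αl ≤ deriv c x ∧ deriv c x ≤ αu :=
      ae_restrict_of_ae_restrict_of_subset hsub hbd
    have hint : IntervalIntegrable (deriv c) volume t s := by
      rw [intervalIntegrable_iff_integrableOn_Icc_of_le hts]
      refine Integrable.mono' (g := fun _ => |αl| + |αu|)
        ((integrableOn_const_iff).mpr (Or.inr measure_Icc_lt_top))
        ((measurable_deriv c).aestronglyMeasurable.restrict) ?_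
      filter_upwards [hbd'] with x hx
      rw [Real.norm_eq_abs, abs_le]
      constructor
      · nlinarith [neg_abs_le αl, le_abs_self αu, abs_nonneg αl, abs_nonneg αu]
      · nlinarith [neg_abs_le αl, le_abs_self αu, abs_nonneg αl, abs_nonneg αu]
    have hftc : ∫ x in t..s, deriv c x = c s - c t := by
      refine intervalIntegral.integral_eq_sub_of_hasDerivAt ?_ hint
      intro x hx
      rw [Set.uIcc_of_le hts] at hx
      have hmem := hsub hx
      rw [hderiv' x hmem]
      exact hderiv x hmem
    constructor
    · have h := intervalIntegral.integral_mono_ae_restrict hts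
        (intervalIntegrable_const (c := αl)) hint ?_
      · rw [hftc] at h
        simpa [mul_comm] using h
      · filter_upwards [hbd'] with x hx using hx.1
    · have h := intervalIntegral.integral_mono_ae_restrict hts hint
        (intervalIntegrable_const (c := αu)) ?_
      · rw [hftc] at h
        simpa [mul_comm] using h
      · filter_upwards [hbd'] with x hx using hx.2
  set A : ℝ := (αu + αl) / 2 with hA
  set B : ℝ := (αu - αl) / 2 with hB
  have hA0 : 0 ≤ A := by rw [hA]; linarith
  have hB0 : 0 ≤ B := by simp [hB]; linarith
  -- pointwise key estimate
  have h1 : ∀ x, |c (u x) - c (v x) - A * (u x - v x)| ≤ B * |u x - v x| := by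
    intro x
    rcases le_total (v x) (u x) with h | h
    · obtain ⟨hl, hr⟩ := mono (v x) (hv x) (u x) (hu x) h
      rw [abs_le, abs_of_nonneg (by linarith : (0:ℝ) ≤ u x - v x)]
      constructor <;> [nlinarith; nlinarith]
    · obtain ⟨hl, hr⟩ := mono (u x) (hu x) (v x) (hv x) h
      rw [abs_le, abs_of_nonpos (by linarith : u x - v x ≤ 0)]
      constructor <;> [nlinarith; nlinarith]
  -- measurability of c ∘ u, c ∘ v
  have hcOn : ContinuousOn c (Set.Icc (0:ℝ) 1) := fun x hx =>
    (hderiv x hx).continuousAt.continuousWithinAt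
  have hG : Continuous fun x : ℝ => c (min 1 (max 0 x)) := by
    refine hcOn.comp_continuous (continuous_const.min (continuous_const.max continuous_id)) ?_
    intro x
    exact ⟨le_min zero_le_one (le_max_left 0 x), min_le_left _ _⟩
  have hGu : ∀ x, c (u x) = c (min 1 (max 0 (u x))) := fun x => by
    rw [max_eq_right (hu x).1, min_eq_right (hu x).2]
  have hGv : ∀ x, c (v x) = c (min 1 (max 0 (v x))) := fun x => by
    rw [max_eq_right (hv x).1, min_eq_right (hv x).2]
  have hmcu : Measurable fun x => c (u x) := by
    simp only [fun x => hGu x]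
    exact hG.measurable.comp hum
  have hmcv : Measurable fun x => c (v x) := by
    simp only [fun x => hGv x]
    exact hG.measurable.comp hvm
  -- interval integrability helper
  have bddInt : ∀ (f : ℝ → ℝ) (C : ℝ), Measurable f → (∀ x, |f x| ≤ C) →
      IntervalIntegrable f volume a b := by
    intro f C hf hC
    rw [intervalIntegrable_iff]
    refine Integrable.mono' ((integrableOn_const_iff (C := C)).mpr (Or.inr ?_))
      hf.aestronglyMeasurable.restrict
      (Filter.Eventually.of_forall fun x => by simpa [Real.norm_eq_abs] using hC x)
    exact measure_Ioc_lt_top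
  have hw1 : ∀ x, |u x - v x| ≤ 1 := by
    intro x
    rw [abs_le]
    exact ⟨by linarith [(hu x).1, (hv x).2], by linarith [(hu x).2, (hv x).1]⟩
  have i2 : IntervalIntegrable (fun x => u x - v x) volume a b :=
    bddInt _ 1 (hum.sub hvm) hw1
  have i3 : IntervalIntegrable (fun x => |u x - v x|) volume a b :=
    bddInt _ 1 (hum.sub hvm).abs (fun x => by rw [abs_abs]; exact hw1 x)
  have i1 : IntervalIntegrable (fun x => c (u x) - c (v x) - A * (u x - v x)) volume a b := by
    refine bddInt _ B ((hmcu.sub hmcv).sub ((measurable_const).mul (hum.sub hvm))) ?_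
    intro x
    calc |c (u x) - c (v x) - A * (u x - v x)| ≤ B * |u x - v x| := h1 x
      _ ≤ B * 1 := by exact mul_le_mul_of_nonneg_left (hw1 x) hB0
      _ = B := mul_one B
  have split : ∫ x in a..b, (c (u x) - c (v x)) =
      (∫ x in a..b, (c (u x) - c (v x) - A * (u x - v x))) +
        A * ∫ x in a..b, (u x - v x) := by
    rw [← intervalIntegral.integral_const_mul,
      ← intervalIntegral.integral_add i1 (i2.const_mul A)]
    congr 1
    ext x
    ring
  have habs : |∫ x in a..b, (c (u x) - c (v x) - A * (u x - v x))| ≤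
      B * ∫ x in a..b, |u x - v x| := by
    calc |∫ x in a..b, (c (u x) - c (v x) - A * (u x - v x))|
        ≤ ∫ x in a..b, |c (u x) - c (v x) - A * (u x - v x)| :=
          intervalIntegral.abs_integral_le_integral_abs hab
      _ ≤ ∫ x in a..b, B * |u x - v x| :=
          intervalIntegral.integral_mono_on hab i1.abs (i3.const_mul B) (fun x _ => h1 x)
      _ = B * ∫ x in a..b, |u x - v x| := intervalIntegral.integral_const_mul _ _
  calc |∫ x in a..b, (c (u x) - c (v x))|
      ≤ |∫ x in a..b, (c (u x) - c (v x) - A * (u x - v x))| +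
          |A * ∫ x in a..b, (u x - v x)| := by rw [split]; exact abs_add_le _ _
    _ ≤ B * (∫ x in a..b, |u x - v x|) + A * |∫ x in a..b, (u x - v x)| := by
        rw [abs_mul, abs_of_nonneg hA0]
        linarith [habs]
    _ = ((αu + αl) / 2) * |∫ x in a..b, (u x - v x)| +
        ((αu - αl) / 2) * ∫ x in a..b, |u x - v x| := by rw [hA, hB]; ring
end

section
/- Let η : [0,T] → ℝ≥0 be continuous, A ≥ 0, K ≥ 0, and suppose η(t) ≤ A + K ∫_0^t η(s) ds for all t ∈ [0,T]. Suppose moreover a family η_{a,b}(t) := ∫_a^b u(t,x) dx satisfies η_{a,b}(t) ≤ η⁰_{a−Lt, b+Lt} + K ∫_0^t η_{-1,1}(s) ds for all a < b, where η⁰_{a,b} = ∫_a^b u(0,x) dx, u ≥ 0 and u(0,·) ∈ L¹. Then η_{a,b}(t) ≤ η⁰_{a−Lt, b+Lt} · e^{Kt} for all a < b with (a,b) ⊇ (-1 − Lt, 1 + Lt). -/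
/-!
The mass `φ s = ∫_{-1}^{1} u(s, ·)` on the reference interval satisfies, by the hypothesis with
`(a, b) = (-1, 1)`, the integral inequality `φ s ≤ D + K ∫_0^s φ`, where `D` is the initial mass
on `(a - L t, b + L t)`, which contains every cone base `(-1 - L s, 1 + L s)` with `s ≤ t`.
The integral form of Gronwall's inequality gives `K ∫_0^t φ ≤ D (e^{K t} - 1)`, and inserting
this in the hypothesis for `(a, b)` yields the bound `D e^{K t}`.
-/

open MeasureTheory Set Filter Topology Real intervalIntegral

lemma frequently_slope_lt_of_eventually_slope_le {f g : ℝ → ℝ} {x r : ℝ}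
    (hg : ContinuousWithinAt g (Ioi x) x) (hr : g x < r)
    (hslope : ∀ᶠ z in 𝓝[>] x, (z - x)⁻¹ * (f z - f x) ≤ g z) :
    ∃ᶠ z in 𝓝[>] x, (z - x)⁻¹ * (f z - f x) < r :=
  ((hslope.and (hg.eventually_lt_const hr)).mono fun _ h => h.1.trans_lt h.2).frequently

section IntegralGronwall

variable {φ : ℝ → ℝ} {C K t : ℝ}

/-- Since `φ ≥ 0` its primitive `I` is monotone, so `∫_x^z φ ≤ (z - x) (C + K I z)`: this right
slope bound feeds the differential form of Gronwall's inequality. -/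
theorem integral_le_gronwallBound_of_le_add_mul_integral (hK : 0 ≤ K) (ht : 0 ≤ t)
    (hint : IntervalIntegrable φ volume 0 t) (hφ0 : ∀ s ∈ Icc 0 t, 0 ≤ φ s)
    (hφ : ∀ s ∈ Icc 0 t, φ s ≤ C + K * ∫ r in (0 : ℝ)..s, φ r) :
    ∫ s in (0 : ℝ)..t, φ s ≤ gronwallBound 0 K C t := by
  set I : ℝ → ℝ := fun s => ∫ r in (0 : ℝ)..s, φ r
  have hIcont : ContinuousOn I (Icc 0 t) := by
    rw [← uIcc_of_le ht]
    exact continuousOn_primitive_interval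
      (by rw [uIcc_of_le ht]; exact (intervalIntegrable_iff_integrableOn_Icc_of_le ht).1 hint)
  have hsub : ∀ x z, 0 ≤ x → x ≤ z → z ≤ t → IntervalIntegrable φ volume x z :=
    fun x z hx hxz hz => hint.mono_set <| by
      rw [uIcc_of_le ht, uIcc_of_le hxz]; exact Icc_subset_Icc hx hz
  have hImono : ∀ x z, 0 ≤ x → x ≤ z → z ≤ t → I x ≤ I z := fun x z hx hxz hz =>
    integral_mono_interval le_rfl hx hxz
      (ae_restrict_of_forall_mem measurableSet_Ioc fun s hs => hφ0 s ⟨hs.1.le, hs.2.trans hz⟩)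
      (hsub 0 z le_rfl (hx.trans hxz) hz)
  have hslope : ∀ x ∈ Ico 0 t, ∀ z ∈ Ioo x t, (z - x)⁻¹ * (I z - I x) ≤ K * I z + C := by
    rintro x ⟨hx0, -⟩ z ⟨hxz, hzt⟩
    have hxz0 : 0 ≤ z := hx0.trans hxz.le
    have hincr : I z - I x = ∫ s in x..z, φ s :=
      integral_interval_sub_left (hsub 0 z le_rfl hxz0 hzt.le)
        (hsub 0 x le_rfl hx0 (hxz.trans hzt).le)
    have hbound : ∫ s in x..z, φ s ≤ ∫ _ in x..z, (K * I z + C) :=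
      integral_mono_on hxz.le (hsub x z hx0 hxz.le hzt.le) intervalIntegrable_const fun s hs => by
        have hs0 : 0 ≤ s := hx0.trans hs.1
        have := hφ s ⟨hs0, hs.2.trans hzt.le⟩
        have := mul_le_mul_of_nonneg_left (hImono s z hs0 hs.2 hzt.le) hK
        linarith
    rw [inv_mul_le_iff₀ (sub_pos.2 hxz), hincr]
    rwa [intervalIntegral.integral_const, smul_eq_mul] at hbound
  have hcont : ∀ x ∈ Ico 0 t, ContinuousWithinAt (fun z => K * I z + C) (Ioi x) x := fun x hx =>
    ((hIcont x (Ico_subset_Icc_self hx)).mono_of_mem_nhdsWithin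
      (mem_of_superset (Ioo_mem_nhdsGT hx.2)
        (Ioo_subset_Icc_self.trans (Icc_subset_Icc_left hx.1)))).const_mul K |>.add_const C
  have hgronwall := le_gronwallBound_of_liminf_deriv_right_le (δ := 0) hIcont
    (fun x hx r hr => frequently_slope_lt_of_eventually_slope_le (hcont x hx) hr
      (eventually_of_mem (Ioo_mem_nhdsGT hx.2) (hslope x hx)))
    (by simp [I]) (fun _ _ => le_rfl) t ⟨ht, le_rfl⟩
  simpa using hgronwall

theorem mul_integral_le_mul_exp_sub_one_of_le_add_mul_integral (hK : 0 ≤ K) (ht : 0 ≤ t)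
    (hφ0 : ∀ s ∈ Icc 0 t, 0 ≤ φ s) (hφ : ∀ s ∈ Icc 0 t, φ s ≤ C + K * ∫ r in (0 : ℝ)..s, φ r) :
    K * ∫ s in (0 : ℝ)..t, φ s ≤ C * (exp (K * t) - 1) := by
  by_cases hint : IntervalIntegrable φ volume 0 t
  · have hI := integral_le_gronwallBound_of_le_add_mul_integral hK ht hint hφ0 hφ
    rcases hK.eq_or_lt with rfl | hKpos
    · simp
    rw [gronwallBound_of_K_ne_0 hKpos.ne'] at hI
    calc K * ∫ s in (0 : ℝ)..t, φ s ≤ K * (0 * exp (K * t) + C / K * (exp (K * t) - 1)) :=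
          mul_le_mul_of_nonneg_left hI hK
      _ = C * (exp (K * t) - 1) := by field_simp; ring
  · -- the integral is the junk value `0`; `C ≥ 0` is the hypothesis at `s = 0`
    have hC : 0 ≤ C := by simpa using (hφ0 0 ⟨le_rfl, ht⟩).trans (hφ 0 ⟨le_rfl, ht⟩)
    rw [integral_undef hint, mul_zero]
    exact mul_nonneg hC (sub_nonneg.2 (one_le_exp (mul_nonneg hK ht)))

end IntegralGronwall

theorem stmt19_general (T K L : ℝ) (hK : 0 ≤ K) (hL : 0 < L)
    (u : ℝ → ℝ → ℝ)
    (hu0 : ∀ t x, 0 ≤ u t x)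
    (huint : Integrable (fun x => u 0 x))
    (hfam : ∀ a b : ℝ, a < b → ∀ t ∈ Set.Icc 0 T,
      (∫ x in a..b, u t x) ≤ (∫ x in (a - L * t)..(b + L * t), u 0 x) +
        K * ∫ s in (0:ℝ)..t, ∫ x in (-1:ℝ)..(1:ℝ), u s x) :
    ∀ a b : ℝ, a < b → ∀ t ∈ Set.Icc 0 T, a ≤ -1 - L * t → 1 + L * t ≤ b →
      (∫ x in a..b, u t x) ≤
        (∫ x in (a - L * t)..(b + L * t), u 0 x) * Real.exp (K * t) := by
  intro a b hab t ht ha hb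
  set D := ∫ x in (a - L * t)..(b + L * t), u 0 x
  have hcone : ∀ s ∈ Icc 0 t, ∫ x in (-1 - L * s)..(1 + L * s), u 0 x ≤ D := fun s hs => by
    have : L * s ≤ L * t := mul_le_mul_of_nonneg_left hs.2 hL.le
    have : 0 ≤ L * s := mul_nonneg hL.le hs.1
    exact integral_mono_interval (by linarith) (by linarith) (by linarith)
      (ae_of_all _ (hu0 0)) huint.intervalIntegrable
  have hsource : ∀ s ∈ Icc 0 t, ∫ x in (-1 : ℝ)..1, u s x ≤
      D + K * ∫ r in (0 : ℝ)..s, ∫ x in (-1 : ℝ)..1, u r x := fun s hs => by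
    linarith [hfam (-1) 1 (by norm_num) s ⟨hs.1, hs.2.trans ht.2⟩, hcone s hs]
  have hgronwall := mul_integral_le_mul_exp_sub_one_of_le_add_mul_integral hK ht.1
    (fun s _ => integral_nonneg (by norm_num) fun x _ => hu0 s x) hsource
  calc ∫ x in a..b, u t x ≤ D + K * ∫ s in (0 : ℝ)..t, ∫ x in (-1 : ℝ)..1, u s x :=
        hfam a b hab t ht
    _ ≤ D + D * (exp (K * t) - 1) := by linarith
    _ = D * exp (K * t) := by ring

/-- Gronwall-type propagation estimate combining finite speed of propagation
with a nonlocal source term. -/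
theorem stmt19 (T A K L : ℝ) (hT : 0 < T) (hA : 0 ≤ A) (hK : 0 ≤ K) (hL : 0 < L)
    (η : ℝ → ℝ) (hηc : ContinuousOn η (Set.Icc 0 T)) (hη0 : ∀ t ∈ Set.Icc 0 T, 0 ≤ η t)
    (hηg : ∀ t ∈ Set.Icc 0 T, η t ≤ A + K * ∫ s in (0:ℝ)..t, η s)
    (u : ℝ → ℝ → ℝ) (hum : Measurable (Function.uncurry u))
    (hu0 : ∀ t x, 0 ≤ u t x)
    (huint : Integrable (fun x => u 0 x))
    (hfam : ∀ a b : ℝ, a < b → ∀ t ∈ Set.Icc 0 T,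
      (∫ x in a..b, u t x) ≤ (∫ x in (a - L * t)..(b + L * t), u 0 x) +
        K * ∫ s in (0:ℝ)..t, ∫ x in (-1:ℝ)..(1:ℝ), u s x) :
    ∀ a b : ℝ, a < b → ∀ t ∈ Set.Icc 0 T, a ≤ -1 - L * t → 1 + L * t ≤ b →
      (∫ x in a..b, u t x) ≤
        (∫ x in (a - L * t)..(b + L * t), u 0 x) * Real.exp (K * t) :=
  stmt19_general T K L hK hL u hu0 huint hfam
end
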